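/- For a real number $q$ with $q > 0$ and $q \ne 1$, and for all positive integers $n$ and $r$, $\sum_{\ell=1}^{n} q^{\ell-1} \binom{\ell+r-1}{r}_q H_{\ell+r-1}(q) = \binom{n+r}{r+1}_q H_{n+r-1}(q) - \frac{q^{r}}{[r+1]_q} \binom{n+r-1}{r+1}_q$. -/

import Mathlib

/-- The `q`-integer `[n]_q = (1 - q^n)/(1 - q)`. -/
noncomputable def qint (q : ℝ) (n : ℕ) : ℝ := (1 - q ^ n) / (1 - q)

/-- The `q`-factorial `[n]_q! = [n]_q [n-1]_q ⋯ [1]_q`, with `[0]_q! = 1`. -/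
noncomputable def qfact (q : ℝ) : ℕ → ℝ
  | 0 => 1
  | n + 1 => qint q (n + 1) * qfact q n

/-- The `q`-binomial coefficient `C(n,k)_q = [n]_q!/([k]_q! [n-k]_q!)`, equal to `0` for `k > n`. -/
noncomputable def qbinom (q : ℝ) (n k : ℕ) : ℝ :=
  if k ≤ n then qfact q n / (qfact q k * qfact q (n - k)) else 0

/-- The `q`-hyperharmonic numbers: `H_n^{(0)}(q) = 1/(q [n]_q)` and
`H_n^{(r)}(q) = ∑_{j=1}^n q^j H_j^{(r-1)}(q)` for `r ≥ 1` (so `H_0^{(r)}(q) = 0`). -/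
noncomputable def qhyp (q : ℝ) : ℕ → ℕ → ℝ
  | 0, n => 1 / (q * qint q n)
  | r + 1, n => ∑ j ∈ Finset.Icc 1 n, q ^ j * qhyp q r j

/-- The `q`-harmonic number `H_m(q) = ∑_{j=1}^m q^{j-1}/[j]_q` (with `H_0(q) = 0`). -/
noncomputable def qharm (q : ℝ) (m : ℕ) : ℝ := ∑ j ∈ Finset.Icc 1 m, q ^ (j - 1) / qint q j

/-!
Induction on `n`. Put `N = n + r - 1`. By the `q`-Pascal rule
`C(N+2, r+1) = C(N+1, r+1) + q^n C(N+1, r)`, passing from `n` to `n + 1` raises the right-hand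
side by the new summand `q^n C(N+1, r) H_{N+1}` plus
`C(N+1, r+1) q^N/[N+1] - (q^r/[r+1]) (C(N+1, r+1) - C(N, r+1))`, and this remainder vanishes by
Pascal's rule once more together with the absorption identity `[r+1] C(N+1, r+1) = [N+1] C(N, r)`.
-/

section QAnalogues

variable {q : ℝ}

theorem qint_ne_zero (hq1 : q ≠ 1) (hqm1 : q ≠ -1) {k : ℕ} (hk : k ≠ 0) :
    qint q k ≠ 0 := by
  refine div_ne_zero (sub_ne_zero.2 fun h => ?_) (sub_ne_zero.2 hq1.symm)
  rcases (pow_eq_one_iff_of_ne_zero hk).1 h.symm with h | ⟨h, -⟩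
  exacts [hq1 h, hqm1 h]

theorem qfact_succ (n : ℕ) : qfact q (n + 1) = qint q (n + 1) * qfact q n := rfl

theorem qfact_ne_zero (hq1 : q ≠ 1) (hqm1 : q ≠ -1) : ∀ k, qfact q k ≠ 0
  | 0 => one_ne_zero
  | k + 1 => mul_ne_zero (qint_ne_zero hq1 hqm1 k.succ_ne_zero) (qfact_ne_zero hq1 hqm1 k)

theorem qint_add (hq1 : q ≠ 1) (a b : ℕ) : qint q (a + b) = qint q a + q ^ a * qint q b := by
  have : 1 - q ≠ 0 := sub_ne_zero.2 hq1.symm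
  simp only [qint, pow_add]
  field_simp
  ring

theorem qharm_succ (m : ℕ) : qharm q (m + 1) = qharm q m + q ^ m / qint q (m + 1) := by
  rw [qharm, qharm, Finset.sum_Icc_succ_top (Nat.le_add_left 1 m), Nat.add_sub_cancel]

theorem qbinom_of_lt {n k : ℕ} (h : n < k) : qbinom q n k = 0 := if_neg (not_le.2 h)

theorem qbinom_of_eq_add {n m k : ℕ} (h : n = m + k) :
    qbinom q n k = qfact q n / (qfact q k * qfact q m) := by
  subst h
  rw [qbinom, if_pos (Nat.le_add_left k m), Nat.add_sub_cancel]

theorem qbinom_self (hq1 : q ≠ 1) (hqm1 : q ≠ -1) (n : ℕ) : qbinom q n n = 1 := by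
  rw [qbinom_of_eq_add (zero_add n).symm, qfact, mul_one, div_self (qfact_ne_zero hq1 hqm1 n)]

theorem qbinom_pascal (hq1 : q ≠ 1) (hqm1 : q ≠ -1) (m k : ℕ) :
    qbinom q (m + k + 1) (k + 1) = qbinom q (m + k) (k + 1) + q ^ m * qbinom q (m + k) k := by
  rcases m with _ | j
  · simp [qbinom_self hq1 hqm1, qbinom_of_lt (Nat.lt_succ_self k)]
  have hint : qint q (j + 1 + k + 1) = qint q (j + 1) + q ^ (j + 1) * qint q (k + 1) := by
    rw [add_assoc, qint_add hq1]
  rw [qbinom_of_eq_add (add_assoc (j + 1) k 1),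
    qbinom_of_eq_add (by omega : j + 1 + k = j + (k + 1)),
    qbinom_of_eq_add rfl, qfact_succ (j + 1 + k), qfact_succ k, qfact_succ j, hint]
  have := qfact_ne_zero hq1 hqm1
  have := qint_ne_zero hq1 hqm1 k.succ_ne_zero
  have := qint_ne_zero hq1 hqm1 j.succ_ne_zero
  field_simp

theorem qint_mul_qbinom_succ (hq1 : q ≠ 1) (hqm1 : q ≠ -1) (m k : ℕ) :
    qint q (k + 1) * qbinom q (m + k + 1) (k + 1) = qint q (m + k + 1) * qbinom q (m + k) k := by
  rw [qbinom_of_eq_add (add_assoc m k 1), qbinom_of_eq_add rfl, qfact_succ (m + k), qfact_succ k]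
  have := qfact_ne_zero hq1 hqm1
  have := qint_ne_zero hq1 hqm1 k.succ_ne_zero
  field_simp

theorem qbinom_mul_qpow_div_qint (hq1 : q ≠ 1) (hqm1 : q ≠ -1) (N k : ℕ) :
    qbinom q (N + 1) (k + 1) * (q ^ N / qint q (N + 1)) =
      q ^ k / qint q (k + 1) * (qbinom q (N + 1) (k + 1) - qbinom q N (k + 1)) := by
  rcases lt_or_ge N k with h | h
  · simp [qbinom_of_lt (Nat.succ_lt_succ h), qbinom_of_lt (Nat.lt_succ_of_lt h)]
  obtain ⟨m, rfl⟩ := Nat.exists_eq_add_of_le' h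
  have hk := qint_ne_zero hq1 hqm1 k.succ_ne_zero
  have := qint_ne_zero hq1 hqm1 (m + k).succ_ne_zero
  have habs : qbinom q (m + k + 1) (k + 1) =
      qint q (m + k + 1) * qbinom q (m + k) k / qint q (k + 1) :=
    eq_div_of_mul_eq hk ((mul_comm _ _).trans (qint_mul_qbinom_succ hq1 hqm1 m k))
  rw [sub_eq_of_eq_add' (qbinom_pascal hq1 hqm1 m k), habs, pow_add]
  field_simp

end QAnalogues

theorem sum_qpow_qbinom_mul_qharm_general (q : ℝ) (hq : 0 < q) (hq1 : q ≠ 1) (n r : ℕ)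
    (hr : 1 ≤ r) :
    ∑ ℓ ∈ Finset.Icc 1 n, q ^ (ℓ - 1) * qbinom q (ℓ + r - 1) r * qharm q (ℓ + r - 1) =
      qbinom q (n + r) (r + 1) * qharm q (n + r - 1) -
        q ^ r / qint q (r + 1) * qbinom q (n + r - 1) (r + 1) := by
  have hqm1 : q ≠ -1 := by linarith
  obtain ⟨s, rfl⟩ := Nat.exists_eq_add_of_le' hr
  induction n with
  | zero => simp [qbinom_of_lt]
  | succ n ih =>
    rw [Finset.sum_Icc_succ_top (by omega), ih,
      show n + 1 + (s + 1) = n + s + 1 + 1 by omega, show n + (s + 1) = n + s + 1 by omega]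
    simp only [Nat.add_sub_cancel]
    linear_combination -qharm q (n + s + 1) * qbinom_pascal hq1 hqm1 n (s + 1) -
      qbinom q (n + s + 1) (s + 1 + 1) * qharm_succ (q := q) (n + s) -
      qbinom_mul_qpow_div_qint hq1 hqm1 (n + s) (s + 1)

/-- For `q > 0`, `q ≠ 1` and positive integers `n, r`,
`∑_{ℓ=1}^n q^{ℓ-1} C(ℓ+r-1, r)_q H_{ℓ+r-1}(q)
   = C(n+r, r+1)_q H_{n+r-1}(q) - (q^r/[r+1]_q) C(n+r-1, r+1)_q`. -/
theorem sum_qpow_qbinom_mul_qharm (q : ℝ) (hq : 0 < q) (hq1 : q ≠ 1) (n r : ℕ)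
    (hn : 1 ≤ n) (hr : 1 ≤ r) :
    ∑ ℓ ∈ Finset.Icc 1 n, q ^ (ℓ - 1) * qbinom q (ℓ + r - 1) r * qharm q (ℓ + r - 1) =
      qbinom q (n + r) (r + 1) * qharm q (n + r - 1) -
        q ^ r / qint q (r + 1) * qbinom q (n + r - 1) (r + 1) :=
  sum_qpow_qbinom_mul_qharm_general q hq hq1 n r hr
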